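/- Let $1 \le q \le p \le \infty$ and $\phi \in \mathcal{G}_{q,p}$. There exists a constant $C > 0$ such that for every measurable function $f : \mathbb{R}^d \to \mathbb{C}$, $C^{-1}\, \widetilde{\|f\|}_{(L^q,L^p)^\phi} \le \|f\|_{(L^q,L^p)^\phi} \le C\, \widetilde{\|f\|}_{(L^q,L^p)^\phi}$, where $\widetilde{\|f\|}_{(L^q,L^p)^\phi} = \sup_{r>0} \frac{1}{\phi(r)} r^{-d/q}\, {}_{r}\widetilde{\|f\|}_{q,p}$. -/

import Mathlib

open MeasureTheory ENNReal Set Metric Filter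

noncomputable section

/-- Shorthand for the Euclidean space `ℝ^d`. -/
abbrev Rd (d : ℕ) := EuclideanSpace ℝ (Fin d)

/-- The `L^p` "norm" (with values in `ℝ≥0∞`) of an `ℝ≥0∞`-valued function. -/
def eLpNormE {α : Type*} [MeasurableSpace α] (g : α → ℝ≥0∞) (p : ℝ≥0∞) (μ : Measure α) :
    ℝ≥0∞ :=
  if p = ∞ then essSup g μ else (∫⁻ x, g x ^ p.toReal ∂μ) ^ (1 / p.toReal)

/-- The discrete `ℓ^p` norm of an `ℝ≥0∞`-valued family. -/
def lpNormE {ι : Type*} (a : ι → ℝ≥0∞) (p : ℝ≥0∞) : ℝ≥0∞ :=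
  if p = ∞ then ⨆ k, a k else (∑' k, a k ^ p.toReal) ^ (1 / p.toReal)

/-- The continuous amalgam norm `‖f‖_{q,p,r}` of `f : ℝ^d → E`:
the `L^p` norm (in `y`) of `y ↦ ‖f · χ_{B(y,r)}‖_{L^q}`. -/
def contAmalgam (d : ℕ) {E : Type*} [NormedAddCommGroup E] (f : Rd d → E)
    (q p : ℝ≥0∞) (r : ℝ) : ℝ≥0∞ :=
  eLpNormE (fun y => eLpNorm ((Metric.ball y r).indicator f) q volume) p volume

/-- The continuous amalgam norm of an `ℝ≥0∞`-valued function. -/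
def contAmalgamE (d : ℕ) (g : Rd d → ℝ≥0∞) (q p : ℝ≥0∞) (r : ℝ) : ℝ≥0∞ :=
  eLpNormE (fun y => eLpNormE ((Metric.ball y r).indicator g) q volume) p volume

/-- The half-open cube `Q_k^r = ∏_i [r kᵢ, r (kᵢ + 1))` indexed by `k ∈ ℤ^d`. -/
def unitCube (d : ℕ) (r : ℝ) (k : Fin d → ℤ) : Set (Rd d) :=
  {x | ∀ i, r * k i ≤ x i ∧ x i < r * (k i + 1)}

/-- The discrete amalgam norm: the `ℓ^p` norm over `k ∈ ℤ^d` of `‖f χ_{Q_k^r}‖_{L^q}`. -/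
def discAmalgam (d : ℕ) {E : Type*} [NormedAddCommGroup E] (f : Rd d → E)
    (q p : ℝ≥0∞) (r : ℝ) : ℝ≥0∞ :=
  lpNormE (fun k : Fin d → ℤ => eLpNorm ((unitCube d r k).indicator f) q volume) p

/-- The class `𝒢_{q,p}` of weight functions: `φ` is positive and measurable on `(0,∞)`,
`t ↦ t^{d/p} φ(t)` is almost decreasing and `t ↦ t^{d/q} φ(t)` is almost increasing
(with the convention `1/∞ = 0`). -/
structure IsGqp (d : ℕ) (q p : ℝ≥0∞) (φ : ℝ → ℝ) : Prop where
  measurable : Measurable φ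
  pos : ∀ t : ℝ, 0 < t → 0 < φ t
  almost_decreasing : ∃ C : ℝ, 0 < C ∧ ∀ r s : ℝ, 0 < r → r ≤ s →
    s ^ ((d : ℝ) * (1 / p).toReal) * φ s ≤ C * (r ^ ((d : ℝ) * (1 / p).toReal) * φ r)
  almost_increasing : ∃ C : ℝ, 0 < C ∧ ∀ r s : ℝ, 0 < r → r ≤ s →
    r ^ ((d : ℝ) * (1 / q).toReal) * φ r ≤ C * (s ^ ((d : ℝ) * (1 / q).toReal) * φ s)

/-- The generalized Fofana norm
`‖f‖_{(L^q,L^p)^φ} = sup_{r>0} φ(r)⁻¹ r^{d(-1/q - 1/p)} ‖f‖_{q,p,r}`. -/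
def fofanaNorm (d : ℕ) {E : Type*} [NormedAddCommGroup E] (f : Rd d → E)
    (q p : ℝ≥0∞) (φ : ℝ → ℝ) : ℝ≥0∞ :=
  ⨆ r : {r : ℝ // 0 < r},
    ENNReal.ofReal ((φ r)⁻¹ * (r : ℝ) ^ ((d : ℝ) * (-(1 / q).toReal - (1 / p).toReal))) *
      contAmalgam d f q p r

/-- The generalized Fofana norm of an `ℝ≥0∞`-valued function. -/
def fofanaNormE (d : ℕ) (g : Rd d → ℝ≥0∞) (q p : ℝ≥0∞) (φ : ℝ → ℝ) : ℝ≥0∞ :=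
  ⨆ r : {r : ℝ // 0 < r},
    ENNReal.ofReal ((φ r)⁻¹ * (r : ℝ) ^ ((d : ℝ) * (-(1 / q).toReal - (1 / p).toReal))) *
      contAmalgamE d g q p r

/-- The discrete variant of the generalized Fofana norm,
`sup_{r>0} φ(r)⁻¹ r^{-d/q} ‖f‖~_{q,p,r}`. -/
def fofanaNormDisc (d : ℕ) {E : Type*} [NormedAddCommGroup E] (f : Rd d → E)
    (q p : ℝ≥0∞) (φ : ℝ → ℝ) : ℝ≥0∞ :=
  ⨆ r : {r : ℝ // 0 < r},
    ENNReal.ofReal ((φ r)⁻¹ * (r : ℝ) ^ (-(d : ℝ) * (1 / q).toReal)) *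
      discAmalgam d f q p r

/-- The Hardy–Littlewood maximal function (with values in `ℝ≥0∞`). -/
def hlMax (d : ℕ) {E : Type*} [NormedAddCommGroup E] (f : Rd d → E) (x : Rd d) : ℝ≥0∞ :=
  ⨆ r : {r : ℝ // 0 < r},
    (volume (Metric.ball x (r : ℝ)))⁻¹ * ∫⁻ y in Metric.ball x (r : ℝ), (‖f y‖₊ : ℝ≥0∞)

/-!
Cover each ball `B(y, r)` by the `3^d` cubes of side `r` adjacent to the cube containing `y`, and
conversely put each cube `Q_k^r` inside the ball of radius `r (√d + 1)` around any of its points.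
Since `y ↦ (index of the cube containing y)` pushes Lebesgue measure forward to `r^d` times counting
measure on `ℤ^d`, integrating these pointwise comparisons in `y` gives
`‖f‖_{q,p,r} ≤ 3^d r^{d/p} ‖f‖~_{q,p,r}` and `r^{d/p} ‖f‖~_{q,p,r} ≤ ‖f‖_{q,p,r(√d+1)}`.
The first bound compares the weights radius by radius; the second changes the radius by the fixed
factor `√d + 1`, which the almost decrease of `t ↦ t^{d/p} φ(t)` absorbs into the constant.
-/

lemma eLpNormE_eq_eLpNorm {α : Type*} [MeasurableSpace α] {μ : Measure α} (g : α → ℝ≥0∞)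
    {p : ℝ≥0∞} (hp : p ≠ 0) : eLpNormE g p μ = eLpNorm g p μ := by
  rw [eLpNormE]
  split_ifs with htop
  · simp [htop, eLpNormEssSup]
  · simp [eLpNorm_eq_eLpNorm' hp htop, eLpNorm']

lemma lpNormE_eq_eLpNorm {ι : Type*} [MeasurableSpace ι] [MeasurableSingletonClass ι]
    (a : ι → ℝ≥0∞) {p : ℝ≥0∞} (hp : p ≠ 0) : lpNormE a p = eLpNorm a p Measure.count := by
  rw [lpNormE]
  split_ifs with htop
  · simp [htop, eLpNormEssSup]
  · simp [eLpNorm_eq_eLpNorm' hp htop, eLpNorm', lintegral_count]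

lemma MeasureTheory.eLpNorm_indicator_le_sum_of_subset_biUnion {α ι E : Type*}
    [MeasurableSpace α] [NormedAddCommGroup E] {μ : Measure α} {q : ℝ≥0∞} {f : α → E}
    {s : Set α} {t : ι → Set α} {J : Finset ι} (hst : s ⊆ ⋃ j ∈ J, t j)
    (ht : ∀ j, MeasurableSet (t j)) (hf : AEStronglyMeasurable f μ) (hq : 1 ≤ q) :
    eLpNorm (s.indicator f) q μ ≤ ∑ j ∈ J, eLpNorm ((t j).indicator f) q μ := by
  have hpointwise : ∀ x, ‖s.indicator f x‖ₑ ≤ ∑ j ∈ J, ‖(t j).indicator f x‖ₑ := fun x => by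
    by_cases hx : x ∈ s
    · obtain ⟨j, hj, hxj⟩ := mem_iUnion₂.1 (hst hx)
      calc ‖s.indicator f x‖ₑ = ‖(t j).indicator f x‖ₑ := by
            rw [indicator_of_mem hx, indicator_of_mem hxj]
        _ ≤ ∑ j ∈ J, ‖(t j).indicator f x‖ₑ :=
          Finset.single_le_sum (f := fun j => ‖(t j).indicator f x‖ₑ) (fun _ _ => zero_le) hj
    · simp [indicator_of_notMem hx]
  calc eLpNorm (s.indicator f) q μ ≤ eLpNorm (∑ j ∈ J, fun x => ‖(t j).indicator f x‖ₑ) q μ :=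
        eLpNorm_mono_enorm fun x => by
          simpa only [Finset.sum_apply, enorm_eq_self] using hpointwise x
    _ ≤ ∑ j ∈ J, eLpNorm (fun x => ‖(t j).indicator f x‖ₑ) q μ :=
        eLpNorm_sum_le (fun j _ => (hf.indicator (ht j)).enorm.aestronglyMeasurable) hq
    _ = ∑ j ∈ J, eLpNorm ((t j).indicator f) q μ := by simp only [eLpNorm_enorm]

lemma ENNReal.ofReal_mul_rpow_mul_ofReal_rpow (x : ℝ) {r : ℝ} (hr : 0 < r) (u v : ℝ) :
    ENNReal.ofReal (x * r ^ u) * ENNReal.ofReal r ^ v = ENNReal.ofReal (x * r ^ (u + v)) := by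
  rw [ENNReal.ofReal_rpow_of_pos hr, ← ENNReal.ofReal_mul' (Real.rpow_nonneg hr.le v), mul_assoc,
    ← Real.rpow_add hr]

lemma inv_mul_rpow_neg_le_of_rpow_mul_le {φ : ℝ → ℝ} {a b c r K : ℝ} (hr : 0 < r) (hc : 0 < c)
    (hφr : 0 < φ r) (hφrc : 0 < φ (r * c)) (hdec : (r * c) ^ b * φ (r * c) ≤ K * (r ^ b * φ r)) :
    (φ r)⁻¹ * r ^ (-a) ≤ K * c ^ a * ((φ (r * c))⁻¹ * (r * c) ^ (-a - b) * r ^ b) := by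
  have hsplit : (r * c) ^ (-a - b) = r ^ (-a) * (c ^ a)⁻¹ * ((r * c) ^ b)⁻¹ := by
    rw [Real.rpow_sub (by positivity), Real.rpow_neg (by positivity), Real.mul_rpow hr.le hc.le,
      Real.rpow_neg hr.le]
    field_simp
  have hca : 0 < c ^ a := Real.rpow_pos_of_pos hc a
  calc (φ r)⁻¹ * r ^ (-a) = r ^ (-a) * (1 / φ r) := by ring
    _ ≤ r ^ (-a) * (K * r ^ b / ((r * c) ^ b * φ (r * c))) := by
        refine mul_le_mul_of_nonneg_left ?_ (by positivity)
        rw [div_le_div_iff₀ hφr (by positivity)]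
        linarith
    _ = K * c ^ a * ((φ (r * c))⁻¹ * (r * c) ^ (-a - b) * r ^ b) := by
        rw [hsplit]
        field_simp

section Cubes

variable {d : ℕ} {r : ℝ}

def cubeIndex (r : ℝ) (x : Rd d) : Fin d → ℤ := fun i => ⌊x i / r⌋

lemma cubeIndex_eq_iff (hr : 0 < r) {x : Rd d} {k : Fin d → ℤ} :
    cubeIndex r x = k ↔ x ∈ unitCube d r k := by
  simp only [funext_iff, cubeIndex, Int.floor_eq_iff, le_div_iff₀ hr, div_lt_iff₀ hr, unitCube,
    mem_ofPred_eq, mul_comm r]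

lemma mem_unitCube_cubeIndex (hr : 0 < r) (x : Rd d) : x ∈ unitCube d r (cubeIndex r x) :=
  (cubeIndex_eq_iff hr).1 rfl

lemma measurable_cubeIndex (r : ℝ) : Measurable (cubeIndex (d := d) r) :=
  measurable_pi_lambda _ fun i => ((measurable_pi_apply i).comp
    (MeasurableEquiv.toLp 2 (Fin d → ℝ)).symm.measurable |>.div_const r).floor

lemma preimage_cubeIndex_singleton (hr : 0 < r) (k : Fin d → ℤ) :
    cubeIndex r ⁻¹' {k} = unitCube d r k :=
  Set.ext fun _ => cubeIndex_eq_iff hr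

lemma measurableSet_unitCube (hr : 0 < r) (k : Fin d → ℤ) : MeasurableSet (unitCube d r k) :=
  preimage_cubeIndex_singleton hr k ▸ measurable_cubeIndex r (measurableSet_singleton k)

lemma volume_unitCube (k : Fin d → ℤ) : volume (unitCube d r k) = ENNReal.ofReal r ^ d := by
  have hcube : unitCube d r k = (MeasurableEquiv.toLp 2 (Fin d → ℝ)).symm ⁻¹'
      univ.pi fun i => Ico (r * k i) (r * (k i + 1)) := by
    ext x
    simp only [unitCube, mem_preimage, mem_univ_pi, mem_Ico]
    rfl
  rw [hcube, (EuclideanSpace.volume_preserving_symm_measurableEquiv_toLp (Fin d)).measure_preimage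
      (MeasurableSet.univ_pi fun _ => measurableSet_Ico).nullMeasurableSet, volume_pi_pi]
  simp [Real.volume_Ico, ← mul_sub]

lemma map_cubeIndex_volume (hr : 0 < r) :
    (volume : Measure (Rd d)).map (cubeIndex r) = ENNReal.ofReal r ^ d • Measure.count := by
  refine Measure.ext_of_singleton fun k => ?_
  rw [Measure.map_apply (measurable_cubeIndex r) (measurableSet_singleton k),
    preimage_cubeIndex_singleton hr, volume_unitCube, Measure.smul_apply,
    Measure.count_singleton, smul_eq_mul, mul_one]

lemma eLpNorm_comp_cubeIndex {ε : Type*} [TopologicalSpace ε] [ContinuousENorm ε] (hr : 0 < r)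
    (A : (Fin d → ℤ) → ε) (p : ℝ≥0∞) :
    eLpNorm (A ∘ cubeIndex r) p volume =
      ENNReal.ofReal r ^ ((d : ℝ) * (1 / p).toReal) * eLpNorm A p Measure.count := by
  rw [← eLpNorm_map_measure StronglyMeasurable.of_discrete.aestronglyMeasurable
    (measurable_cubeIndex r).aemeasurable, map_cubeIndex_volume hr,
    eLpNorm_smul_measure_of_ne_zero (by positivity), smul_eq_mul, ← ENNReal.rpow_natCast,
    ← ENNReal.rpow_mul]

def adjacentOffsets (d : ℕ) : Finset (Fin d → ℤ) :=
  Fintype.piFinset fun _ => Finset.Icc (-1) 1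

lemma card_adjacentOffsets : (adjacentOffsets d).card = 3 ^ d := by
  simp [adjacentOffsets, Fintype.card_piFinset]

lemma Int.floor_sub_floor_mem_Icc {u v : ℝ} (h : |u - v| < 1) :
    ⌊u⌋ - ⌊v⌋ ∈ Finset.Icc (-1 : ℤ) 1 := by
  rw [abs_lt] at h
  have hu : ⌊v⌋ - 1 ≤ ⌊u⌋ := Int.le_floor.2 (by push_cast; linarith [Int.floor_le v])
  have hv : ⌊u⌋ - 1 ≤ ⌊v⌋ := Int.le_floor.2 (by push_cast; linarith [Int.floor_le u])
  rw [Finset.mem_Icc]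
  omega

lemma ball_subset_iUnion_unitCube (hr : 0 < r) (y : Rd d) :
    ball y r ⊆ ⋃ j ∈ adjacentOffsets d, unitCube d r (j + cubeIndex r y) := by
  intro x hx
  refine mem_iUnion₂.2 ⟨cubeIndex r x - cubeIndex r y, ?_, by
    simpa using mem_unitCube_cubeIndex hr x⟩
  refine Fintype.mem_piFinset.2 fun i => Int.floor_sub_floor_mem_Icc ?_
  rw [← sub_div, abs_div, abs_of_pos hr, div_lt_one hr]
  exact (PiLp.dist_apply_le x y i).trans_lt hx

lemma dist_le_of_mem_unitCube (hr : 0 ≤ r) {k : Fin d → ℤ} {x y : Rd d}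
    (hx : x ∈ unitCube d r k) (hy : y ∈ unitCube d r k) : dist x y ≤ √d * r := by
  have hcoord : ∀ i, dist (x i) (y i) ^ 2 ≤ r ^ 2 := fun i => by
    rw [Real.dist_eq, sq_abs]
    nlinarith [hx i, hy i]
  calc dist x y = √(∑ i, dist (x i) (y i) ^ 2) := EuclideanSpace.dist_eq x y
    _ ≤ √(∑ _i : Fin d, r ^ 2) := Real.sqrt_le_sqrt (Finset.sum_le_sum fun i _ => hcoord i)
    _ = √d * r := by simp [Real.sqrt_mul, Real.sqrt_sq hr]

end Cubes

section Amalgam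

variable {d : ℕ} {r : ℝ} {E : Type*} [NormedAddCommGroup E] {f : Rd d → E} {q p : ℝ≥0∞}

lemma contAmalgam_le_discAmalgam (hq : 1 ≤ q) (hp : 1 ≤ p) (hr : 0 < r)
    (hf : AEStronglyMeasurable f volume) :
    contAmalgam d f q p r ≤
      3 ^ d * (ENNReal.ofReal r ^ ((d : ℝ) * (1 / p).toReal) * discAmalgam d f q p r) := by
  set A : (Fin d → ℤ) → ℝ≥0∞ := fun k => eLpNorm ((unitCube d r k).indicator f) q volume
  have hp0 : p ≠ 0 := (zero_lt_one.trans_le hp).ne'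
  rw [contAmalgam, discAmalgam, eLpNormE_eq_eLpNorm _ hp0, lpNormE_eq_eLpNorm _ hp0]
  calc eLpNorm (fun y => eLpNorm ((ball y r).indicator f) q volume) p volume
      ≤ eLpNorm (∑ j ∈ adjacentOffsets d, (A ∘ (j + ·)) ∘ cubeIndex r) p volume :=
        eLpNorm_mono_enorm fun y => by
          simp only [enorm_eq_self, Finset.sum_apply, Function.comp_apply]
          exact eLpNorm_indicator_le_sum_of_subset_biUnion (ball_subset_iUnion_unitCube hr y)
            (fun j => measurableSet_unitCube hr _) hf hq
    _ ≤ ∑ j ∈ adjacentOffsets d, eLpNorm ((A ∘ (j + ·)) ∘ cubeIndex r) p volume :=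
        eLpNorm_sum_le (fun j _ => (StronglyMeasurable.of_discrete.comp_measurable
          (measurable_cubeIndex r)).aestronglyMeasurable) hp
    _ = ∑ _j ∈ adjacentOffsets d,
          ENNReal.ofReal r ^ ((d : ℝ) * (1 / p).toReal) * eLpNorm A p Measure.count := by
        refine Finset.sum_congr rfl fun j _ => ?_
        rw [eLpNorm_comp_cubeIndex hr, eLpNorm_comp_measurePreserving
          StronglyMeasurable.of_discrete.aestronglyMeasurable (measurePreserving_add_left _ j)]
    _ = _ := by rw [Finset.sum_const, card_adjacentOffsets, nsmul_eq_mul]; norm_cast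

lemma discAmalgam_le_contAmalgam (hp : p ≠ 0) (hr : 0 < r) :
    ENNReal.ofReal r ^ ((d : ℝ) * (1 / p).toReal) * discAmalgam d f q p r ≤
      contAmalgam d f q p (r * (√d + 1)) := by
  rw [contAmalgam, discAmalgam, eLpNormE_eq_eLpNorm _ hp, lpNormE_eq_eLpNorm _ hp,
    ← eLpNorm_comp_cubeIndex hr]
  refine eLpNorm_mono_enorm fun y => ?_
  simp only [enorm_eq_self, Function.comp_apply]
  refine eLpNorm_mono fun x => norm_indicator_le_of_subset (fun z hz => ?_) f x
  calc dist z y ≤ √d * r := dist_le_of_mem_unitCube hr.le hz (mem_unitCube_cubeIndex hr y)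
    _ < r * (√d + 1) := by nlinarith

lemma fofanaNorm_le_mul_fofanaNormDisc (φ : ℝ → ℝ) (hq : 1 ≤ q) (hp : 1 ≤ p)
    (hf : AEStronglyMeasurable f volume) :
    fofanaNorm d f q p φ ≤ 3 ^ d * fofanaNormDisc d f q p φ := by
  refine iSup_le fun ⟨r, hr⟩ => ?_
  calc ENNReal.ofReal ((φ r)⁻¹ * r ^ ((d : ℝ) * (-(1 / q).toReal - (1 / p).toReal))) *
        contAmalgam d f q p r
      ≤ ENNReal.ofReal ((φ r)⁻¹ * r ^ ((d : ℝ) * (-(1 / q).toReal - (1 / p).toReal))) *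
        (3 ^ d * (ENNReal.ofReal r ^ ((d : ℝ) * (1 / p).toReal) * discAmalgam d f q p r)) := by
        gcongr
        exact contAmalgam_le_discAmalgam hq hp hr hf
    _ = 3 ^ d * (ENNReal.ofReal ((φ r)⁻¹ * r ^ (-(d : ℝ) * (1 / q).toReal)) *
        discAmalgam d f q p r) := by
        rw [mul_left_comm, ← mul_assoc (ENNReal.ofReal _),
          ENNReal.ofReal_mul_rpow_mul_ofReal_rpow _ hr]
        ring_nf
    _ ≤ 3 ^ d * fofanaNormDisc d f q p φ := by
        gcongr
        exact le_iSup (fun s : {s : ℝ // 0 < s} => ENNReal.ofReal ((φ s)⁻¹ *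
          (s : ℝ) ^ (-(d : ℝ) * (1 / q).toReal)) * discAmalgam d f q p s) ⟨r, hr⟩

lemma fofanaNormDisc_le_mul_fofanaNorm {φ : ℝ → ℝ} {K : ℝ} (hp : p ≠ 0)
    (hφ : ∀ t : ℝ, 0 < t → 0 < φ t)
    (hdec : ∀ r s : ℝ, 0 < r → r ≤ s →
      s ^ ((d : ℝ) * (1 / p).toReal) * φ s ≤ K * (r ^ ((d : ℝ) * (1 / p).toReal) * φ r)) :
    fofanaNormDisc d f q p φ ≤
      ENNReal.ofReal (K * (√d + 1) ^ ((d : ℝ) * (1 / q).toReal)) * fofanaNorm d f q p φ := by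
  refine iSup_le fun ⟨r, hr⟩ => ?_
  set c : ℝ := √d + 1
  have hc : 1 ≤ c := le_add_of_nonneg_left (Real.sqrt_nonneg d)
  have hrc : 0 < r * c := by positivity
  have hweight := inv_mul_rpow_neg_le_of_rpow_mul_le (a := (d : ℝ) * (1 / q).toReal) hr
    (zero_lt_one.trans_le hc) (hφ r hr) (hφ _ hrc) (hdec r _ hr (le_mul_of_one_le_right hr.le hc))
  calc ENNReal.ofReal ((φ r)⁻¹ * r ^ (-(d : ℝ) * (1 / q).toReal)) * discAmalgam d f q p r
      ≤ ENNReal.ofReal (K * c ^ ((d : ℝ) * (1 / q).toReal) * ((φ (r * c))⁻¹ *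
          (r * c) ^ ((d : ℝ) * (-(1 / q).toReal - (1 / p).toReal)) *
          r ^ ((d : ℝ) * (1 / p).toReal))) * discAmalgam d f q p r := by
        gcongr ENNReal.ofReal ?_ * _
        simpa only [neg_mul, mul_sub, mul_neg] using hweight
    _ = ENNReal.ofReal (K * c ^ ((d : ℝ) * (1 / q).toReal)) * (ENNReal.ofReal ((φ (r * c))⁻¹ *
          (r * c) ^ ((d : ℝ) * (-(1 / q).toReal - (1 / p).toReal))) *
          (ENNReal.ofReal r ^ ((d : ℝ) * (1 / p).toReal) * discAmalgam d f q p r)) := by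
        rw [ENNReal.ofReal_mul' (by have := hφ _ hrc; positivity),
          ENNReal.ofReal_mul' (Real.rpow_nonneg hr.le _), ENNReal.ofReal_rpow_of_pos hr]
        ring
    _ ≤ ENNReal.ofReal (K * c ^ ((d : ℝ) * (1 / q).toReal)) * fofanaNorm d f q p φ := by
        gcongr
        refine le_trans ?_ (le_iSup (fun s : {s : ℝ // 0 < s} => ENNReal.ofReal ((φ s)⁻¹ *
          (s : ℝ) ^ ((d : ℝ) * (-(1 / q).toReal - (1 / p).toReal))) * contAmalgam d f q p s)
          ⟨r * c, hrc⟩)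
        gcongr
        exact discAmalgam_le_contAmalgam hp hr

end Amalgam

/-- equivalence of the continuous and discrete generalized Fofana norms:
`C⁻¹ ‖f‖~_{(L^q,L^p)^φ} ≤ ‖f‖_{(L^q,L^p)^φ} ≤ C ‖f‖~_{(L^q,L^p)^φ}`. -/
theorem fofanaNorm_equiv_disc (d : ℕ) (q p : ℝ≥0∞) (hq : 1 ≤ q) (hqp : q ≤ p)
    (φ : ℝ → ℝ) (hφ : IsGqp d q p φ) :
    ∃ C : ℝ, 0 < C ∧ ∀ f : Rd d → ℂ, Measurable f →
      ENNReal.ofReal C⁻¹ * fofanaNormDisc d f q p φ ≤ fofanaNorm d f q p φ ∧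
        fofanaNorm d f q p φ ≤ ENNReal.ofReal C * fofanaNormDisc d f q p φ := by
  obtain ⟨K, -, hdec⟩ := hφ.almost_decreasing
  have hp : 1 ≤ p := hq.trans hqp
  set C : ℝ := max (3 ^ d) (K * (√d + 1) ^ ((d : ℝ) * (1 / q).toReal))
  have hC : 0 < C := lt_max_of_lt_left (by positivity)
  refine ⟨C, hC, fun f hf => ⟨?_, ?_⟩⟩
  · rw [ENNReal.ofReal_inv_of_pos hC, ENNReal.inv_mul_le_iff (by simpa using hC) ofReal_ne_top]
    refine (fofanaNormDisc_le_mul_fofanaNorm (zero_lt_one.trans_le hp).ne' hφ.pos hdec).trans ?_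
    gcongr
    exact le_max_right _ _
  · refine (fofanaNorm_le_mul_fofanaNormDisc φ hq hp hf.aestronglyMeasurable).trans ?_
    gcongr
    exact (ENNReal.ofReal_le_ofReal (le_max_left _ _)).trans_eq' (by norm_num)
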